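/- arXiv:1801.09965 — 3 statements merged into one kernel-verified Lean document; each statement's English description precedes it below -/
import Mathlib

section
/- Let f : Δ → Δ be holomorphic with f(0) = 0 and suppose |f''(0)| = 2(1 - |f'(0)|²) with |f'(0)| < 1. Then there exists θ ∈ ℝ such that f(ζ) = ζ · (e^{iθ}ζ + f'(0)) / (1 + conj(f'(0)) e^{iθ} ζ) for all ζ ∈ Δ. -/
/-!
Write `f z = z * g z` with `g = dslope f 0`. By the Schwarz lemma and the maximum principle `g`
maps the disc into itself, `g 0 = f'(0) =: a`, and `f''(0) = 2 g'(0)`, so the hypothesis says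
`|g'(0)| = 1 - |a|²`: this is the extremal case of the Schwarz–Pick lemma at `0`. Composing `g`
with the disc automorphism `w ↦ (w - a) / (1 - ā w)` gives a self-map of the disc fixing `0` whose
derivative there has modulus `1`, hence a rotation by the equality case of the Schwarz lemma;
solving for `g` gives the formula.
-/

open Metric Set Complex ComplexConjugate

namespace Complex

noncomputable def blaschkeFactor (a w : ℂ) : ℂ := (w - a) / (1 - conj a * w)

section BlaschkeFactor

variable {a w z : ℂ}

theorem normSq_one_sub_conj_mul_sub_normSq_sub (a w : ℂ) :
    normSq (1 - conj a * w) - normSq (w - a) = (1 - normSq a) * (1 - normSq w) := by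
  simp only [normSq_apply, sub_re, sub_im, mul_re, mul_im, one_re, one_im, conj_re, conj_im]
  ring

theorem norm_sub_lt_norm_one_sub_conj_mul (ha : ‖a‖ < 1) (hw : ‖w‖ < 1) :
    ‖w - a‖ < ‖1 - conj a * w‖ := by
  have ha' : normSq a < 1 := by rw [← Complex.sq_norm]; nlinarith [norm_nonneg a]
  have hw' : normSq w < 1 := by rw [← Complex.sq_norm]; nlinarith [norm_nonneg w]
  have key := normSq_one_sub_conj_mul_sub_normSq_sub a w
  have : ‖w - a‖ ^ 2 < ‖1 - conj a * w‖ ^ 2 := by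
    rw [Complex.sq_norm, Complex.sq_norm]
    nlinarith
  exact lt_of_pow_lt_pow_left₀ 2 (norm_nonneg _) this

theorem one_sub_conj_mul_ne_zero (ha : ‖a‖ < 1) (hw : ‖w‖ ≤ 1) : 1 - conj a * w ≠ 0 := by
  intro h
  have : ‖conj a * w‖ < 1 := by
    rw [norm_mul, norm_conj]
    nlinarith [norm_nonneg a, norm_nonneg w]
  rw [← sub_eq_zero.mp h, norm_one] at this
  exact this.false

theorem blaschkeFactor_self (a : ℂ) : blaschkeFactor a a = 0 := by
  simp [blaschkeFactor]

theorem mapsTo_blaschkeFactor (ha : ‖a‖ < 1) :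
    MapsTo (blaschkeFactor a) (ball 0 1) (ball 0 1) := fun _ hw ↦ by
  rw [mem_ball_zero_iff] at hw ⊢
  have hlt := norm_sub_lt_norm_one_sub_conj_mul ha hw
  rwa [blaschkeFactor, norm_div, div_lt_one ((norm_nonneg _).trans_lt hlt)]

theorem differentiableOn_blaschkeFactor (ha : ‖a‖ < 1) :
    DifferentiableOn ℂ (blaschkeFactor a) (ball 0 1) := fun _ hw ↦
  ((differentiableAt_id.sub_const a).div
    ((differentiableAt_id.const_mul _).const_sub 1)
    (one_sub_conj_mul_ne_zero ha (mem_ball_zero_iff.mp hw).le)).differentiableWithinAt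

theorem hasDerivAt_blaschkeFactor_self (ha : ‖a‖ < 1) :
    HasDerivAt (blaschkeFactor a) ((1 - ‖a‖ ^ 2 : ℝ) : ℂ)⁻¹ a := by
  have hD : 1 - conj a * a = ((1 - ‖a‖ ^ 2 : ℝ) : ℂ) := by push_cast [conj_mul']; ring
  have hD0 : 1 - conj a * a ≠ 0 := one_sub_conj_mul_ne_zero ha ha.le
  refine (((hasDerivAt_id' a).sub_const a).fun_div
    (((hasDerivAt_id' a).const_mul (conj a)).const_sub 1) hD0).congr_deriv ?_
  rw [← hD]
  field_simp
  ring

theorem eq_div_of_blaschkeFactor_eq (ha : ‖a‖ < 1) (hw : ‖w‖ < 1) (hz : ‖z‖ ≤ 1)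
    (h : blaschkeFactor a w = z) : w = (z + a) / (1 + conj a * z) := by
  have hz' : 1 + conj a * z ≠ 0 := by
    simpa [sub_eq_add_neg] using one_sub_conj_mul_ne_zero ha (w := -z) (by simpa using hz)
  rw [blaschkeFactor, div_eq_iff (one_sub_conj_mul_ne_zero ha hw.le)] at h
  rw [eq_div_iff hz']
  linear_combination h

end BlaschkeFactor

theorem mapsTo_ball_of_mapsTo_closedBall {E F : Type*} [NormedAddCommGroup E]
    [NormedSpace ℂ E] [NormedAddCommGroup F] [NormedSpace ℂ F] {g : E → F} {U : Set E} {c : E}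
    {r : ℝ} (hU : IsPreconnected U) (hUo : IsOpen U) (hg : DifferentiableOn ℂ g U)
    (hmaps : MapsTo g U (closedBall 0 r)) (hc : c ∈ U) (hgc : ‖g c‖ < r) :
    MapsTo g U (ball 0 r) := by
  intro z hz
  rw [mem_ball_zero_iff]
  by_contra! hr
  have hmax : IsMaxOn (norm ∘ g) U z := fun _ hw ↦
    (mem_closedBall_zero_iff.mp (hmaps hw)).trans hr
  have := norm_eqOn_of_isPreconnected_of_isMaxOn hU hUo hg hz hmax hc
  simp only [Function.comp_apply, Function.const_apply] at this
  linarith [mem_closedBall_zero_iff.mp (hmaps hz)]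

theorem iteratedDeriv_two_eq_two_mul_deriv_dslope {𝕜 : Type*} [NontriviallyNormedField 𝕜]
    [CompleteSpace 𝕜] {f : 𝕜 → 𝕜} {c : 𝕜} (hf : AnalyticAt 𝕜 f c) :
    iteratedDeriv 2 f c = 2 * deriv (dslope f c) c := by
  obtain ⟨p, hp⟩ := hf
  have hg : ContDiffAt 𝕜 (2 : ℕ) (dslope f c) c :=
    hp.has_fpower_series_dslope_fslope.analyticAt.contDiffAt
  have hf_eq : f = fun z ↦ f c + (z - c) * dslope f c z := funext fun z ↦ by
    rw [← smul_eq_mul, sub_smul_dslope]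
    ring
  calc iteratedDeriv 2 f c = iteratedDeriv 2 (fun z ↦ f c + (z - c) * dslope f c z) c := by
        rw [← hf_eq]
    _ = 2 * deriv (dslope f c) c := by
        rw [iteratedDeriv_const_add two_pos,
          iteratedDeriv_fun_mul (f := fun z ↦ z - c) (by fun_prop) hg]
        simp [Finset.sum_range_succ, iteratedDeriv_succ]

section UnitDisc

variable {f : ℂ → ℂ}

theorem mapsTo_closedBall_self_of_mapsTo_ball (hmaps : MapsTo f (ball 0 1) (ball 0 1))
    (h0 : f 0 = 0) : MapsTo f (ball 0 1) (closedBall (f 0) 1) := by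
  rw [h0]
  exact hmaps.mono_right ball_subset_closedBall

theorem mapsTo_dslope_ball (hf : DifferentiableOn ℂ f (ball 0 1))
    (hmaps : MapsTo f (ball 0 1) (ball 0 1)) (h0 : f 0 = 0) (hf' : ‖deriv f 0‖ < 1) :
    MapsTo (dslope f 0) (ball 0 1) (ball 0 1) := by
  have hg : DifferentiableOn ℂ (dslope f 0) (ball 0 1) :=
    (differentiableOn_dslope (ball_mem_nhds _ one_pos)).mpr hf
  refine mapsTo_ball_of_mapsTo_closedBall (convex_ball 0 1).isPreconnected isOpen_ball hg
    (fun z hz ↦ ?_) (mem_ball_self one_pos) (by rwa [dslope_same])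
  rw [mem_closedBall_zero_iff, ← div_one (1 : ℝ)]
  exact norm_dslope_le_div_of_mapsTo_ball hf (mapsTo_closedBall_self_of_mapsTo_ball hmaps h0) hz

theorem eqOn_deriv_mul_of_norm_deriv_eq_one (hf : DifferentiableOn ℂ f (ball 0 1))
    (hmaps : MapsTo f (ball 0 1) (ball 0 1)) (h0 : f 0 = 0) (hf' : ‖deriv f 0‖ = 1) :
    EqOn f (fun z ↦ deriv f 0 * z) (ball 0 1) := by
  intro z hz
  have := affine_of_mapsTo_ball_of_norm_dslope_eq_div hf
    (mapsTo_closedBall_self_of_mapsTo_ball hmaps h0) (mem_ball_self one_pos)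
    (by rw [dslope_same, hf', div_one]) hz
  simpa [h0, dslope_same, mul_comm] using this

theorem exists_eq_div_of_norm_deriv_eq_one_sub_sq (hf : DifferentiableOn ℂ f (ball 0 1))
    (hmaps : MapsTo f (ball 0 1) (ball 0 1)) (hf' : ‖deriv f 0‖ = 1 - ‖f 0‖ ^ 2) :
    ∃ c : ℂ, ‖c‖ = 1 ∧ ∀ z ∈ ball (0 : ℂ) 1, f z = (c * z + f 0) / (1 + conj (f 0) * (c * z)) := by
  have hball : ball (0 : ℂ) 1 ∈ nhds 0 := ball_mem_nhds _ one_pos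
  have ha : ‖f 0‖ < 1 := mem_ball_zero_iff.mp (hmaps (mem_ball_self one_pos))
  have ha' : 0 < 1 - ‖f 0‖ ^ 2 := by nlinarith [norm_nonneg (f 0)]
  set ψ := blaschkeFactor (f 0) ∘ f
  have hψ' : HasDerivAt ψ (((1 - ‖f 0‖ ^ 2 : ℝ) : ℂ)⁻¹ * deriv f 0) 0 :=
    (hasDerivAt_blaschkeFactor_self ha).comp 0 (hf.differentiableAt hball).hasDerivAt
  have hc : ‖deriv ψ 0‖ = 1 := by
    rw [hψ'.deriv, norm_mul, norm_inv, norm_real, Real.norm_of_nonneg ha'.le, hf',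
      inv_mul_cancel₀ ha'.ne']
  have hψ := eqOn_deriv_mul_of_norm_deriv_eq_one
    ((differentiableOn_blaschkeFactor ha).comp hf hmaps)
    ((mapsTo_blaschkeFactor ha).comp hmaps) (blaschkeFactor_self (f 0)) hc
  refine ⟨deriv ψ 0, hc, fun z hz ↦ eq_div_of_blaschkeFactor_eq ha
    (mem_ball_zero_iff.mp (hmaps hz)) ?_ (hψ hz)⟩
  rw [norm_mul, hc, one_mul]
  exact (mem_ball_zero_iff.mp hz).le

end UnitDisc

end Complex

/-- Equality case of the second order Schwarz lemma. -/
theorem schwarz_second_order_equality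
    (f : ℂ → ℂ)
    (hf : DifferentiableOn ℂ f (ball (0 : ℂ) 1))
    (hmap : MapsTo f (ball (0 : ℂ) 1) (ball (0 : ℂ) 1))
    (h0 : f 0 = 0)
    (hlt : ‖deriv f 0‖ < 1)
    (heq : ‖iteratedDeriv 2 f 0‖ = 2 * (1 - ‖deriv f 0‖ ^ 2)) :
    ∃ θ : ℝ, ∀ ζ ∈ ball (0 : ℂ) 1,
      f ζ = ζ * ((Complex.exp (θ * Complex.I) * ζ + deriv f 0) /
        (1 + (starRingEnd ℂ) (deriv f 0) * (Complex.exp (θ * Complex.I) * ζ))) := by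
  have hball : ball (0 : ℂ) 1 ∈ nhds 0 := ball_mem_nhds _ one_pos
  have hg0 : dslope f 0 0 = deriv f 0 := dslope_same f 0
  have hg' : ‖deriv (dslope f 0) 0‖ = 1 - ‖dslope f 0 0‖ ^ 2 := by
    rw [iteratedDeriv_two_eq_two_mul_deriv_dslope (hf.analyticAt hball), norm_mul,
      Complex.norm_two] at heq
    rw [hg0]
    linarith
  obtain ⟨c, hc, hg⟩ := exists_eq_div_of_norm_deriv_eq_one_sub_sq
    ((differentiableOn_dslope hball).mpr hf) (mapsTo_dslope_ball hf hmap h0 hlt) hg'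
  refine ⟨arg c, fun ζ hζ ↦ ?_⟩
  have hexp : exp (arg c * I) = c := by simpa [hc] using norm_mul_exp_arg_mul_I c
  rw [hexp, ← hg0, ← hg ζ hζ]
  simpa [h0] using (sub_smul_dslope f 0 ζ).symm
end

section
/- For every (ξ₁, ξ₂) ∈ ℂ² with λ := sqrt(2/(|ξ₂| + 2|ξ₁|²)) well defined (i.e. (ξ₁,ξ₂) ≠ (0,0)), there exists a holomorphic f : Δ → Δ with f(0) = 0, f'(0) = λξ₁, and f''(0) = λ²ξ₂. -/
/-! The map `ζ ↦ ζ (uζ + a) / (1 + ā u ζ)` sends the disc into itself whenever `‖a‖, ‖u‖ ≤ 1`,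
by the identity `|1 + ā w|² - |w + a|² = (1 - |a|²)(1 - |w|²)`, and its 2-jet at `0` is
`(a, 2u(1 - |a|²))`. For `a = λξ₁` the normalisation of `λ` is precisely the condition
`2(1 - |a|²) = λ²|ξ₂|`, so the phase `u = e^{i arg ξ₂}` gives `f''(0) = λ²ξ₂`. -/

open Metric Set Complex ComplexConjugate Filter Topology

section DerivAtZero

variable {𝕜 : Type*} [NontriviallyNormedField 𝕜]

theorem hasDerivAt_id_mul {g : 𝕜 → 𝕜} {z : 𝕜} (hg : DifferentiableAt 𝕜 g z) :
    HasDerivAt (fun z => z * g z) (g z + z * deriv g z) z := by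
  simpa using (hasDerivAt_id' z).fun_mul hg.hasDerivAt

theorem iteratedDeriv_two_id_mul_zero [CompleteSpace 𝕜] {g : 𝕜 → 𝕜} (hg : AnalyticAt 𝕜 g 0) :
    iteratedDeriv 2 (fun z => z * g z) 0 = 2 * deriv g 0 := by
  have hderiv : deriv (fun z => z * g z) =ᶠ[𝓝 0] fun z => g z + z * deriv g z := by
    filter_upwards [hg.eventually_analyticAt] with z hz
    exact (hasDerivAt_id_mul hz.differentiableAt).deriv
  rw [iteratedDeriv_succ, iteratedDeriv_one, hderiv.deriv_eq,
    (hg.differentiableAt.hasDerivAt.fun_add (hasDerivAt_id_mul hg.deriv.differentiableAt)).deriv]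
  simp only [zero_mul, add_zero]
  ring

theorem hasDerivAt_div_one_add_mul_zero (u a b : 𝕜) :
    HasDerivAt (fun z => (u * z + a) / (1 + b * z)) (u - a * b) 0 := by
  simpa using (((hasDerivAt_id' (0 : 𝕜)).const_mul u).add_const a).fun_div
    (((hasDerivAt_id' (0 : 𝕜)).const_mul b).const_add 1) (by simp)

end DerivAtZero

theorem Complex.normSq_one_add_conj_mul_sub_normSq_add (a w : ℂ) :
    normSq (1 + conj a * w) - normSq (w + a) = (1 - normSq a) * (1 - normSq w) := by
  simp only [normSq_apply, add_re, add_im, mul_re, mul_im, conj_re, conj_im, one_re, one_im]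
  ring

theorem Complex.norm_add_le_norm_one_add_conj_mul {a w : ℂ} (ha : ‖a‖ ≤ 1) (hw : ‖w‖ ≤ 1) :
    ‖w + a‖ ≤ ‖1 + conj a * w‖ := by
  have ha' : normSq a ≤ 1 := by rw [normSq_eq_norm_sq]; nlinarith [norm_nonneg a]
  have hw' : normSq w ≤ 1 := by rw [normSq_eq_norm_sq]; nlinarith [norm_nonneg w]
  have := normSq_one_add_conj_mul_sub_normSq_add a w
  rw [norm_def, norm_def]
  exact Real.sqrt_le_sqrt (by nlinarith)

noncomputable def extremalDisc (a u : ℂ) : ℂ → ℂ :=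
  fun ζ => ζ * ((u * ζ + a) / (1 + conj a * u * ζ))

section ExtremalDisc

variable {a u : ℂ}

theorem extremalDisc_zero (a u : ℂ) : extremalDisc a u 0 = 0 := by
  simp [extremalDisc]

theorem one_add_conj_mul_mul_ne_zero (ha : ‖a‖ ≤ 1) (hu : ‖u‖ ≤ 1) {ζ : ℂ} (hζ : ‖ζ‖ < 1) :
    1 + conj a * u * ζ ≠ 0 := by
  intro h
  have hlt : ‖conj a * u * ζ‖ < 1 := by
    rw [norm_mul, norm_mul, RCLike.norm_conj]
    calc ‖a‖ * ‖u‖ * ‖ζ‖ ≤ 1 * 1 * ‖ζ‖ := by gcongr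
      _ < 1 := by simpa using hζ
  rw [show conj a * u * ζ = -1 by linear_combination h] at hlt
  simp at hlt

theorem differentiableOn_extremalDisc (ha : ‖a‖ ≤ 1) (hu : ‖u‖ ≤ 1) :
    DifferentiableOn ℂ (extremalDisc a u) (ball 0 1) := fun ζ hζ =>
  have hden := one_add_conj_mul_mul_ne_zero ha hu (mem_ball_zero_iff.mp hζ)
  (differentiableAt_id.mul ((by fun_prop : DifferentiableAt ℂ (fun ζ => u * ζ + a) ζ).div
    (by fun_prop) hden)).differentiableWithinAt

theorem norm_extremalDisc_le (ha : ‖a‖ ≤ 1) (hu : ‖u‖ ≤ 1) {ζ : ℂ} (hζ : ‖ζ‖ < 1) :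
    ‖extremalDisc a u ζ‖ ≤ ‖ζ‖ := by
  have hw : ‖u * ζ‖ ≤ 1 := by
    rw [norm_mul]; nlinarith [norm_nonneg u, norm_nonneg ζ]
  have hden := one_add_conj_mul_mul_ne_zero ha hu hζ
  rw [extremalDisc, norm_mul, norm_div]
  refine mul_le_of_le_one_right (norm_nonneg ζ) ((div_le_one (norm_pos_iff.mpr hden)).mpr ?_)
  rw [mul_assoc]
  exact norm_add_le_norm_one_add_conj_mul ha hw

theorem mapsTo_extremalDisc (ha : ‖a‖ ≤ 1) (hu : ‖u‖ ≤ 1) :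
    MapsTo (extremalDisc a u) (ball 0 1) (ball 0 1) := fun ζ hζ => by
  rw [mem_ball_zero_iff] at hζ ⊢
  exact (norm_extremalDisc_le ha hu hζ).trans_lt hζ

theorem deriv_extremalDisc_zero (a u : ℂ) : deriv (extremalDisc a u) 0 = a := by
  have hg : DifferentiableAt ℂ (fun ζ => (u * ζ + a) / (1 + conj a * u * ζ)) 0 :=
    (hasDerivAt_div_one_add_mul_zero u a (conj a * u)).differentiableAt
  unfold extremalDisc
  simpa using (hasDerivAt_id_mul hg).deriv

theorem iteratedDeriv_two_extremalDisc_zero (a u : ℂ) :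
    iteratedDeriv 2 (extremalDisc a u) 0 = 2 * u * (1 - ‖a‖ ^ 2) := by
  have hg : AnalyticAt ℂ (fun ζ => (u * ζ + a) / (1 + conj a * u * ζ)) 0 :=
    (by fun_prop : AnalyticAt ℂ (fun ζ => u * ζ + a) 0).div (by fun_prop) (by simp)
  unfold extremalDisc
  rw [iteratedDeriv_two_id_mul_zero hg,
    (hasDerivAt_div_one_add_mul_zero u a (conj a * u)).deriv]
  linear_combination (-2 * u) * mul_conj' a

end ExtremalDisc

theorem two_mul_one_sub_norm_sq_eq {ξ₁ ξ₂ : ℂ} {lam : ℝ} (hξ : (ξ₁, ξ₂) ≠ (0, 0))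
    (hlam : lam = Real.sqrt (2 / (‖ξ₂‖ + 2 * ‖ξ₁‖ ^ 2))) :
    2 * (1 - ‖(lam : ℂ) * ξ₁‖ ^ 2) = lam ^ 2 * ‖ξ₂‖ := by
  have hD : 0 < ‖ξ₂‖ + 2 * ‖ξ₁‖ ^ 2 := by
    rcases not_and_or.mp (by simpa [Prod.ext_iff] using hξ) with h | h
    · have : 0 < ‖ξ₁‖ := norm_pos_iff.mpr h
      positivity
    · have : 0 < ‖ξ₂‖ := norm_pos_iff.mpr h
      positivity
  have hlam_sq : lam ^ 2 = 2 / (‖ξ₂‖ + 2 * ‖ξ₁‖ ^ 2) := by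
    rw [hlam, Real.sq_sqrt (by positivity)]
  rw [norm_mul, norm_real, Real.norm_eq_abs, mul_pow, sq_abs, hlam_sq]
  field_simp
  ring

/-- Existence of an extremal disc for the second order Kobayashi metric of the disc:
for `λ = √(2/(|ξ₂| + 2|ξ₁|²))` there is a holomorphic `f : Δ → Δ` with `f 0 = 0`,
`f'(0) = λξ₁` and `f''(0) = λ²ξ₂`. -/
theorem kobayashi_two_metric_disc_extremal (ξ₁ ξ₂ : ℂ) (lam : ℝ)
    (hξ : (ξ₁, ξ₂) ≠ (0, 0))
    (hlam : lam = Real.sqrt (2 / (‖ξ₂‖ + 2 * ‖ξ₁‖ ^ 2))) :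
    ∃ f : ℂ → ℂ, DifferentiableOn ℂ f (ball (0 : ℂ) 1) ∧
      MapsTo f (ball (0 : ℂ) 1) (ball (0 : ℂ) 1) ∧ f 0 = 0 ∧
      deriv f 0 = (lam : ℂ) * ξ₁ ∧ iteratedDeriv 2 f 0 = (lam : ℂ) ^ 2 * ξ₂ := by
  set a : ℂ := lam * ξ₁
  set u : ℂ := exp (arg ξ₂ * I)
  have hnorm : 2 * (1 - ‖a‖ ^ 2) = lam ^ 2 * ‖ξ₂‖ := two_mul_one_sub_norm_sq_eq hξ hlam
  have ha : ‖a‖ ≤ 1 := by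
    refine (pow_le_one_iff_of_nonneg (norm_nonneg a) two_ne_zero).mp ?_
    nlinarith [norm_nonneg ξ₂, sq_nonneg lam]
  have hu : ‖u‖ ≤ 1 := (norm_exp_ofReal_mul_I _).le
  refine ⟨extremalDisc a u, differentiableOn_extremalDisc ha hu, mapsTo_extremalDisc ha hu,
    extremalDisc_zero a u, deriv_extremalDisc_zero a u, ?_⟩
  have hnorm' : (2 * (1 - ‖a‖ ^ 2) : ℂ) = lam ^ 2 * ‖ξ₂‖ := by exact_mod_cast hnorm
  rw [iteratedDeriv_two_extremalDisc_zero, ← norm_mul_exp_arg_mul_I ξ₂]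
  linear_combination u * hnorm'
end

section
/- Let f : Δ → Δ be holomorphic of the form f(ζ) = ζ φ(e^{iθ}ζ) where φ(ζ) = (ζ + a)/(1 + conj(a)ζ), |a| < 1, θ ∈ ℝ. Then f(0) = 0, f'(0) = a, and |f''(0)| = 2(1 - |a|²); i.e., f attains equality in the second order Schwarz inequality. -/
open Metric Set

/-! Writing `f ζ = ζ * g ζ` with `g ζ = φ (e^{iθ} ζ)`, the Leibniz rule gives
`f⁽ⁿ⁾(0) = n g⁽ⁿ⁻¹⁾(0)`. Hence `f'(0) = φ(0) = a` and
`f''(0) = 2 e^{iθ} φ'(0) = 2 e^{iθ} (1 - |a|²)`, whose modulus is `2 (1 - |a|²)` as `|a| < 1`. -/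

theorem iteratedDeriv_fun_id_mul_zero {𝕜 : Type*} [NontriviallyNormedField 𝕜] {n : ℕ}
    {g : 𝕜 → 𝕜} (hg : ContDiffAt 𝕜 n g 0) :
    iteratedDeriv n (fun z => z * g z) 0 = n * iteratedDeriv (n - 1) g 0 := by
  change iteratedDeriv n (id * g) 0 = _
  rw [iteratedDeriv_mul contDiffAt_id hg]
  rcases n with _ | n
  · simp
  · rw [Finset.sum_eq_single 1]
    · simp [iteratedDeriv_id]
    · intro i _ hi
      simp [iteratedDeriv_id, hi]
    · simp

noncomputable def moebius (a z : ℂ) : ℂ := (z + a) / (1 + starRingEnd ℂ a * z)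

theorem contDiffAt_moebius {a z : ℂ} (hz : 1 + starRingEnd ℂ a * z ≠ 0) {n : WithTop ℕ∞} :
    ContDiffAt ℂ n (moebius a) z := by
  unfold moebius
  fun_prop (disch := exact hz)

theorem hasDerivAt_moebius {a z : ℂ} (hz : 1 + starRingEnd ℂ a * z ≠ 0) :
    HasDerivAt (moebius a) ((1 - ‖a‖ ^ 2) / (1 + starRingEnd ℂ a * z) ^ 2) z := by
  have h := ((hasDerivAt_id' z).add_const a).div
    (((hasDerivAt_id' z).const_mul (starRingEnd ℂ a)).const_add 1) hz
  rw [← Complex.mul_conj']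
  exact h.congr_deriv (by ring)

theorem deriv_moebius_comp_mul_zero (a e : ℂ) :
    deriv (fun z => moebius a (e * z)) 0 = e * ((1 - ‖a‖ ^ 2 : ℝ) : ℂ) := by
  have h := (hasDerivAt_moebius (a := a) (z := e * 0) (by simp)).comp 0
    ((hasDerivAt_id' (0 : ℂ)).const_mul e)
  simpa [Function.comp_def, mul_comm] using h.deriv

/-- The discs `f(ζ) = ζ φ(e^{iθ}ζ)` with `φ(ζ) = (ζ + a)/(1 + conj(a)ζ)` attain
equality in the second order Schwarz inequality: `f 0 = 0`, `f'(0) = a` and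
`|f''(0)| = 2(1 - |a|²)`. -/
theorem moebius_twist_extremal (a : ℂ) (ha : ‖a‖ < 1) (θ : ℝ) (f : ℂ → ℂ)
    (hf : ∀ ζ, f ζ = ζ * ((Complex.exp (θ * Complex.I) * ζ + a) /
      (1 + (starRingEnd ℂ) a * (Complex.exp (θ * Complex.I) * ζ)))) :
    f 0 = 0 ∧ deriv f 0 = a ∧
      ‖iteratedDeriv 2 f 0‖ = 2 * (1 - ‖a‖ ^ 2) := by
  set e := Complex.exp (θ * Complex.I)
  have hf' : f = fun ζ => ζ * moebius a (e * ζ) := funext hf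
  have hg : ContDiffAt ℂ 2 (fun ζ => moebius a (e * ζ)) 0 :=
    (contDiffAt_moebius (z := e * 0) (by simp)).comp 0 (by fun_prop)
  refine ⟨by simp [hf'], ?_, ?_⟩
  · simpa [hf', moebius] using iteratedDeriv_fun_id_mul_zero (n := 1) (hg.of_le one_le_two)
  · have ha' : 0 ≤ 1 - ‖a‖ ^ 2 := sub_nonneg.2 (pow_le_one₀ (norm_nonneg a) ha.le)
    rw [hf', iteratedDeriv_fun_id_mul_zero hg]
    simp only [Nat.cast_ofNat, Nat.add_one_sub_one, iteratedDeriv_one, deriv_moebius_comp_mul_zero]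
    rw [norm_mul, norm_mul, Complex.norm_exp_ofReal_mul_I, Complex.norm_real,
      Real.norm_of_nonneg ha', RCLike.norm_ofNat, one_mul]
end
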